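/- arXiv:1507.00881 — 6 statements merged into one kernel-verified Lean document; each statement's English description precedes it below -/
import Mathlib

section
/- A vertex w strongly resolves vertices u and v in a connected graph G if and only if d(w,u) = d(w,v) + d(v,u) or d(w,v) = d(w,u) + d(u,v). If S is a strong resolving set of G and u, v are distinct vertices with d(u,v) equal to the diameter of G, then u ∈ S or v ∈ S. -/
/-- A vertex `w` strongly resolves vertices `u` and `v` in graph `G`:
`u` lies on a shortest `v`–`w` path or `v` lies on a shortest `u`–`w` path,
equivalently via distances. -/
def StronglyResolves {V : Type*} (G : SimpleGraph V) (w u v : V) : Prop :=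
  G.dist w u = G.dist w v + G.dist v u ∨ G.dist w v = G.dist w u + G.dist u v

/-- `S` is a strong resolving set of `G`. -/
def IsStrongResolvingSet {V : Type*} (G : SimpleGraph V) (S : Set V) : Prop :=
  ∀ u v : V, u ≠ v → ∃ w ∈ S, StronglyResolves G w u v

/-- The strong metric dimension: minimum cardinality of a strong resolving set. -/
noncomputable def sdim {V : Type*} (G : SimpleGraph V) : ℕ :=
  sInf {m : ℕ | ∃ S : Set V, IsStrongResolvingSet G S ∧ S.ncard = m}

/-- Mutually maximally distant vertices. -/
def MutuallyMaximallyDistant {V : Type*} (G : SimpleGraph V) (u v : V) : Prop :=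
  u ≠ v ∧ (∀ w : V, G.Adj u w → G.dist w v ≤ G.dist u v) ∧
    (∀ w : V, G.Adj v w → G.dist u w ≤ G.dist u v)

/-- The generalized Petersen graph `GP n k`, with outer vertices `Sum.inl i` (the `uᵢ`)
and inner vertices `Sum.inr i` (the `vᵢ`), indices in `ZMod n`. -/
def GP (n k : ℕ) : SimpleGraph (ZMod n ⊕ ZMod n) where
  Adj x y := match x, y with
    | Sum.inl i, Sum.inl j => i ≠ j ∧ (j = i + 1 ∨ i = j + 1)
    | Sum.inl i, Sum.inr j => i = j
    | Sum.inr i, Sum.inl j => i = j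
    | Sum.inr i, Sum.inr j => i ≠ j ∧ (j = i + (k : ZMod n) ∨ i = j + (k : ZMod n))
  symm := ⟨by rintro (i|i) (j|j) h <;> simp_all <;> tauto⟩
  loopless := ⟨by rintro (i|i) h <;> simp_all⟩

namespace SimpleGraph

variable {V : Type*} {G : SimpleGraph V}

lemma Reachable.eq_of_dist_eq_dist_add_diam {w v u : V} (hwv : G.Reachable w v)
    (hdiam : G.diam ≠ 0) (h : G.dist w u = G.dist w v + G.diam) : w = v := by
  have hle : G.dist w u ≤ G.diam := dist_le_diam (ediam_ne_top_of_diam_ne_zero hdiam)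
  exact hwv.dist_eq_zero_iff.mp (by omega)

end SimpleGraph

open SimpleGraph in
lemma StronglyResolves.eq_or_eq_of_dist_eq_diam {V : Type*} {G : SimpleGraph V} (hG : G.Connected)
    {w u v : V} (h : StronglyResolves G w u v) (huv : u ≠ v) (hd : G.dist u v = G.diam) :
    w = v ∨ w = u := by
  have hdiam : G.diam ≠ 0 := hd ▸ (hG.pos_dist_of_ne huv).ne'
  rcases h with h | h
  · refine .inl ((hG w v).eq_of_dist_eq_dist_add_diam hdiam (u := u) ?_)
    rw [h, dist_comm (u := v), hd]
  · refine .inr ((hG w u).eq_of_dist_eq_dist_add_diam hdiam (u := v) ?_)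
    rw [h, hd]

theorem stmt_0_general {V : Type*} (G : SimpleGraph V) (hG : G.Connected)
    (S : Set V) (hS : IsStrongResolvingSet G S) (u v : V) (huv : u ≠ v)
    (hd : G.dist u v = G.diam) : u ∈ S ∨ v ∈ S := by
  obtain ⟨w, hwS, hw⟩ := hS u v huv
  rcases hw.eq_or_eq_of_dist_eq_diam hG huv hd with rfl | rfl
  · exact .inr hwS
  · exact .inl hwS

/-- If `S` is a strong resolving set of a connected graph `G` and `u ≠ v` are at
distance equal to the diameter, then `u ∈ S` or `v ∈ S`. -/
theorem stmt_0 {V : Type*} [Fintype V] (G : SimpleGraph V) (hG : G.Connected)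
    (S : Set V) (hS : IsStrongResolvingSet G S) (u v : V) (huv : u ≠ v)
    (hd : G.dist u v = G.diam) : u ∈ S ∨ v ∈ S :=
  stmt_0_general G hG S hS u v huv hd
end

section
/- If S is a strong resolving set of a connected graph G, then for every pair of mutually maximally distant vertices u, v of G, it holds that u ∈ S or v ∈ S. -/
/-!
If `w` strongly resolves `u, v` with, say, `v` on a shortest `u`–`w` path and `w ≠ v`, then the
neighbour of `v` on a shortest `v`–`w` path is farther from `u` than `v` is, which mutual maximal
distance forbids. So a strong resolver of a mutually maximally distant pair is `u` or `v` itself.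
-/

namespace SimpleGraph

variable {V : Type*} {G : SimpleGraph V} {u v w : V}

lemma Reachable.exists_adj_dist_lt (h : G.Reachable v w) (hne : v ≠ w) :
    ∃ x, G.Adj v x ∧ G.dist x w < G.dist v w := by
  obtain ⟨p, hp⟩ := h.exists_walk_length_eq_dist
  cases p with
  | nil => exact absurd rfl hne
  | cons hadj q =>
    refine ⟨_, hadj, ?_⟩
    rw [← hp, Walk.length_cons]
    exact Nat.lt_succ_of_le (dist_le q)

lemma Connected.exists_adj_dist_lt_of_dist_eq_add (hG : G.Connected) (hvw : v ≠ w)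
    (hbetween : G.dist w u = G.dist w v + G.dist v u) :
    ∃ x, G.Adj v x ∧ G.dist u v < G.dist u x := by
  obtain ⟨x, hadj, hx⟩ := (hG v w).exists_adj_dist_lt hvw
  refine ⟨x, hadj, ?_⟩
  have htri : G.dist w u ≤ G.dist w x + G.dist x u := hG.dist_triangle
  rw [dist_comm (u := w) (v := x)] at htri
  rw [dist_comm (u := w) (v := v)] at hbetween
  rw [dist_comm (u := u) (v := v), dist_comm (u := u) (v := x)]
  omega

end SimpleGraph

section MutuallyMaximallyDistant

open SimpleGraph

variable {V : Type*} {G : SimpleGraph V} {u v w : V}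

lemma MutuallyMaximallyDistant.symm (h : MutuallyMaximallyDistant G u v) :
    MutuallyMaximallyDistant G v u := by
  obtain ⟨hne, hu, hv⟩ := h
  refine ⟨hne.symm, fun w hw => ?_, fun w hw => ?_⟩
  · rw [dist_comm, dist_comm (u := v)]
    exact hv w hw
  · rw [dist_comm, dist_comm (u := v)]
    exact hu w hw

lemma MutuallyMaximallyDistant.dist_ne_add (hG : G.Connected) (h : MutuallyMaximallyDistant G u v)
    (hwv : w ≠ v) : G.dist w u ≠ G.dist w v + G.dist v u := fun hbetween => by
  obtain ⟨x, hadj, hx⟩ := hG.exists_adj_dist_lt_of_dist_eq_add hwv.symm hbetween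
  exact (h.2.2 x hadj).not_gt hx

end MutuallyMaximallyDistant

theorem stmt_1_general {V : Type*} (G : SimpleGraph V) (hG : G.Connected)
    (S : Set V) (hS : IsStrongResolvingSet G S) (u v : V)
    (h : MutuallyMaximallyDistant G u v) : u ∈ S ∨ v ∈ S := by
  by_contra! ⟨huS, hvS⟩
  obtain ⟨w, hwS, hw | hw⟩ := hS u v h.1
  · exact h.dist_ne_add hG (ne_of_mem_of_not_mem hwS hvS) hw
  · exact h.symm.dist_ne_add hG (ne_of_mem_of_not_mem hwS huS) hw

/-- If `S` is a strong resolving set of a connected graph `G`, then for every pair of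
mutually maximally distant vertices `u, v`, `u ∈ S` or `v ∈ S`. -/
theorem stmt_1 {V : Type*} [Fintype V] (G : SimpleGraph V) (hG : G.Connected)
    (S : Set V) (hS : IsStrongResolvingSet G S) (u v : V)
    (h : MutuallyMaximallyDistant G u v) : u ∈ S ∨ v ∈ S :=
  stmt_1_general G hG S hS u v h
end

section
/- The strong metric dimension of the generalized Petersen graph GP(n,1) equals n, for n ≥ 3. -/
/-!
`GP n 1` is the prism `C_n □ K_2`, in which distances add: `d((a,s),(b,t)) = d(a,b) + [s ≠ t]`.
Hence the inner copy of `C_n` is a strong resolving set: a pair of outer vertices is resolved by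
the inner twin of one of them. Conversely, if `d(0, c)` is the diameter of the circulant graph
`C_n`, then by translation invariance every pair `(u_i, v_{c+i})` realises the diameter of the
prism, so it is mutually maximally distant and only its endpoints strongly resolve it. These `n`
pairs are disjoint, so every strong resolving set has at least `n` vertices.
-/

namespace SimpleGraph

variable {V W : Type*} {G : SimpleGraph V} {H : SimpleGraph W}

theorem Hom.edist_map_le (f : G →g H) (u v : V) : H.edist (f u) (f v) ≤ G.edist u v := by
  by_cases hr : G.Reachable u v
  · obtain ⟨p, hp⟩ := hr.exists_walk_length_eq_edist
    simpa [← hp] using edist_le (p.map f)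
  · simp [edist_eq_top_of_not_reachable hr]

theorem Iso.edist_map (e : G ≃g H) (u v : V) : H.edist (e u) (e v) = G.edist u v :=
  le_antisymm (e.toHom.edist_map_le u v) (by simpa using e.symm.toHom.edist_map_le (e u) (e v))

theorem Iso.dist_map (e : G ≃g H) (u v : V) : H.dist (e u) (e v) = G.dist u v := by
  simp only [dist, e.edist_map]

theorem dist_boxProd {G : SimpleGraph V} {H : SimpleGraph W} (hG : G.Connected)
    (hH : H.Connected) (x y : V × W) :
    (G □ H).dist x y = G.dist x.1 y.1 + H.dist x.2 y.2 := by
  have h := edist_boxProd (G := G) (H := H) x y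
  rw [← ((hG.boxProd hH) x y).coe_dist_eq_edist, ← (hG x.1 y.1).coe_dist_eq_edist,
    ← (hH x.2 y.2).coe_dist_eq_edist] at h
  exact_mod_cast h

theorem Connected.exists_adj_dist_lt (hG : G.Connected) {u w : V} (h : u ≠ w) :
    ∃ y, G.Adj u y ∧ G.dist y w < G.dist u w := by
  obtain ⟨p, hp⟩ := hG.exists_walk_length_eq_dist u w
  cases p with
  | nil => exact absurd rfl h
  | cons hadj q =>
    refine ⟨_, hadj, ?_⟩
    have := dist_le q
    simp only [Walk.length_cons] at hp
    omega

section Circulant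

variable {A : Type*} [AddGroup A] (s : Set A)

def circulantGraph.addRightIso (c : A) : circulantGraph s ≃g circulantGraph s where
  toEquiv := Equiv.addRight c
  map_rel_iff' := circulantGraph_adj_translate

theorem circulantGraph.dist_add_right (a b c : A) :
    (circulantGraph s).dist (a + c) (b + c) = (circulantGraph s).dist a b :=
  (circulantGraph.addRightIso s c).dist_map a b

theorem circulantGraph.exists_forall_dist_le_dist_add [Finite A] :
    ∃ c : A, ∀ x a b, (circulantGraph s).dist a b ≤ (circulantGraph s).dist x (c + x) := by
  obtain ⟨⟨a₀, b₀⟩, hmax⟩ := Finite.exists_max fun p : A × A ↦ (circulantGraph s).dist p.1 p.2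
  refine ⟨b₀ - a₀, fun x a b ↦ ?_⟩
  have h := circulantGraph.dist_add_right s a₀ b₀ (-a₀ + x)
  rw [← add_assoc, add_neg_cancel, zero_add, ← add_assoc, ← sub_eq_add_neg] at h
  exact h ▸ hmax (a, b)

end Circulant

end SimpleGraph

open SimpleGraph

section StrongResolving

variable {V W : Type*} {G : SimpleGraph V} {H : SimpleGraph W}

theorem stronglyResolves_left (u v : V) : StronglyResolves G u u v :=
  Or.inr (by rw [dist_self, zero_add])

theorem stronglyResolves_right (u v : V) : StronglyResolves G v u v :=
  Or.inl (by rw [dist_self, zero_add])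

theorem isStrongResolvingSet_univ : IsStrongResolvingSet G Set.univ :=
  fun u v _ ↦ ⟨u, Set.mem_univ u, stronglyResolves_left u v⟩

theorem sdim_le_ncard {S : Set V} (hS : IsStrongResolvingSet G S) : sdim G ≤ S.ncard :=
  Nat.sInf_le ⟨S, hS, rfl⟩

theorem le_sdim {m : ℕ} (h : ∀ S, IsStrongResolvingSet G S → m ≤ S.ncard) : m ≤ sdim G :=
  le_csInf ⟨_, Set.univ, isStrongResolvingSet_univ, rfl⟩ (by rintro _ ⟨S, hS, rfl⟩; exact h S hS)

theorem StronglyResolves.map_iso (e : G ≃g H) {w u v : V} (h : StronglyResolves G w u v) :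
    StronglyResolves H (e w) (e u) (e v) := by
  simpa only [StronglyResolves, e.dist_map] using h

theorem IsStrongResolvingSet.image_iso (e : G ≃g H) {S : Set V} (hS : IsStrongResolvingSet G S) :
    IsStrongResolvingSet H (e '' S) := by
  intro u v huv
  obtain ⟨w, hwS, hw⟩ := hS (e.symm u) (e.symm v) (by simpa using huv)
  exact ⟨e w, Set.mem_image_of_mem e hwS, by simpa using hw.map_iso e⟩

theorem sdim_le_of_iso (e : G ≃g H) : sdim H ≤ sdim G := by
  obtain ⟨S, hS, hcard⟩ : sdim G ∈ {m | ∃ S, IsStrongResolvingSet G S ∧ S.ncard = m} :=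
    Nat.sInf_mem ⟨_, Set.univ, isStrongResolvingSet_univ, rfl⟩
  calc sdim H ≤ (e '' S).ncard := sdim_le_ncard (hS.image_iso e)
    _ = sdim G := by rw [Set.ncard_image_of_injective S e.injective]; exact hcard

theorem SimpleGraph.Iso.sdim_eq (e : G ≃g H) : sdim G = sdim H :=
  le_antisymm (sdim_le_of_iso e.symm) (sdim_le_of_iso e)

theorem MutuallyMaximallyDistant.of_forall_dist_le {u v : V} (huv : u ≠ v)
    (h : ∀ x y, G.dist x y ≤ G.dist u v) : MutuallyMaximallyDistant G u v :=
  ⟨huv, fun w _ ↦ h w v, fun w _ ↦ h u w⟩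

theorem MutuallyMaximallyDistant.eq_or_eq_of_stronglyResolves (hG : G.Connected) {u v w : V}
    (h : MutuallyMaximallyDistant G u v) (hw : StronglyResolves G w u v) : w = u ∨ w = v := by
  by_contra! hne
  rcases hw with hw | hw
  · obtain ⟨y, hvy, hy⟩ := hG.exists_adj_dist_lt (Ne.symm hne.2)
    have := hG.dist_triangle (u := w) (v := y) (w := u)
    have := h.2.2 y hvy
    rw [dist_comm (u := y) (v := w), dist_comm (u := y) (v := u), dist_comm (u := v) (v := w),
      dist_comm (u := v) (v := u)] at *
    omega
  · obtain ⟨y, huy, hy⟩ := hG.exists_adj_dist_lt (Ne.symm hne.1)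
    have := hG.dist_triangle (u := w) (v := y) (w := v)
    have := h.2.1 y huy
    rw [dist_comm (u := y) (v := w), dist_comm (u := u) (v := w)] at *
    omega

end StrongResolving

theorem card_le_ncard_of_forall_mem_or_mem {α ι : Type*} [Finite α] {f g : ι → α}
    (hfg : Function.Injective (Sum.elim f g)) {S : Set α} (hS : ∀ i, f i ∈ S ∨ g i ∈ S) :
    Nat.card ι ≤ S.ncard := by
  classical
  let c : ι → ι ⊕ ι := fun i ↦ if f i ∈ S then .inl i else .inr i
  have hcS : ∀ i, Sum.elim f g (c i) ∈ S := by
    intro i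
    by_cases h : f i ∈ S <;> simp [c, h, (hS i).resolve_left]
  have hc : Function.Injective c := by
    intro i j hij
    by_cases hi : f i ∈ S <;> by_cases hj : f j ∈ S <;> simp_all [c]
  rw [← Nat.card_coe_set_eq]
  exact Nat.card_le_card_of_injective (fun i ↦ ⟨_, hcS i⟩)
    fun i j hij ↦ hc (hfg (congrArg Subtype.val hij))

section Prism

variable {V : Type*} {G : SimpleGraph V}

theorem isStrongResolvingSet_boxProd_top_bool (hG : G.Connected) :
    IsStrongResolvingSet (G □ (⊤ : SimpleGraph Bool)) (Set.univ ×ˢ {true}) := by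
  rintro ⟨a, i⟩ ⟨b, j⟩ hne
  cases i
  · cases j
    · refine ⟨(a, true), by simp, Or.inr ?_⟩
      simp [dist_boxProd hG connected_top, dist_top, add_comm]
    · exact ⟨(b, true), by simp, stronglyResolves_right _ _⟩
  · exact ⟨(a, true), by simp, stronglyResolves_left _ _⟩

theorem sdim_boxProd_top_bool_le (hG : G.Connected) :
    sdim (G □ (⊤ : SimpleGraph Bool)) ≤ Nat.card V :=
  (sdim_le_ncard (isStrongResolvingSet_boxProd_top_bool hG)).trans_eq (by simp [Set.ncard_prod])

theorem card_le_sdim_boxProd_top_bool [Finite V] (hG : G.Connected) {σ : V → V}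
    (hσ : Function.Injective σ) (hσ_diam : ∀ x a b, G.dist a b ≤ G.dist x (σ x)) :
    Nat.card V ≤ sdim (G □ (⊤ : SimpleGraph Bool)) := by
  refine le_sdim fun S hS ↦ card_le_ncard_of_forall_mem_or_mem
    (f := fun x ↦ (x, false)) (g := fun x ↦ (σ x, true)) ?_ fun x ↦ ?_
  · exact (Prod.mk_left_injective false).sumElim ((Prod.mk_left_injective true).comp hσ)
      (by simp)
  have hmmd : MutuallyMaximallyDistant (G □ (⊤ : SimpleGraph Bool)) (x, false) (σ x, true) := by
    refine .of_forall_dist_le (by simp) fun a b ↦ ?_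
    have := hσ_diam x a.1 b.1
    simp only [dist_boxProd hG connected_top, dist_top, Bool.false_eq_true, if_false]
    split_ifs <;> omega
  obtain ⟨w, hwS, hw⟩ := hS (x, false) (σ x, true) (by simp)
  rcases hmmd.eq_or_eq_of_stronglyResolves (hG.boxProd connected_top) hw with rfl | rfl
  exacts [.inl hwS, .inr hwS]

end Prism

theorem ZMod.circulantGraph_one_connected (n : ℕ) [NeZero n] :
    (circulantGraph ({1} : Set (ZMod n))).Connected := by
  have hreach : ∀ k : ℕ, (circulantGraph ({1} : Set (ZMod n))).Reachable 0 k := by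
    intro k
    induction k with
    | zero => simp
    | succ k ih =>
      refine ih.trans ?_
      by_cases h : (k : ZMod n) = k + 1
      · rw [Nat.cast_succ, ← h]
      · exact Adj.reachable (by simp [h])
  refine connected_iff_exists_forall_reachable _ |>.mpr ⟨0, fun a ↦ ?_⟩
  simpa using hreach a.val

def gpOneIsoBoxProd (n : ℕ) :
    GP n 1 ≃g circulantGraph ({1} : Set (ZMod n)) □ (⊤ : SimpleGraph Bool) where
  toEquiv := (Equiv.boolProdEquivSum (ZMod n)).symm.trans (Equiv.prodComm _ _)
  map_rel_iff' := by
    rintro (i | i) (j | j) <;> simp [GP, boxProd_adj, sub_eq_iff_eq_add', or_comm]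

/-- `sdim (GP n 1) = n` for `n ≥ 3`. -/
theorem stmt_2 (n : ℕ) (hn : 3 ≤ n) : sdim (GP n 1) = n := by
  have : NeZero n := ⟨by omega⟩
  obtain ⟨c, hc⟩ := circulantGraph.exists_forall_dist_le_dist_add ({1} : Set (ZMod n))
  have hconn := ZMod.circulantGraph_one_connected n
  rw [(gpOneIsoBoxProd n).sdim_eq]
  refine le_antisymm ((sdim_boxProd_top_bool_le hconn).trans_eq (Nat.card_zmod n)) ?_
  exact (Nat.card_zmod n).symm.trans_le
    (card_le_sdim_boxProd_top_bool hconn (add_right_injective c) hc)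
end

section
/- In the generalized Petersen graph GP(4k+2,2) with k ≥ 2, for every i with 0 ≤ i ≤ 2k one has d(u_i, u_{i+2k+1}) = d(v_i, v_{i+2k+1}) = k+3, and this value equals the diameter of GP(4k+2,2). -/
/-! For even `n`, the distance in `GP n 2` between two vertices depends only on their sides
(outer `u` or inner `v`) and their cyclic offset `c = 2m + e`, `e ∈ {0, 1}`: it is
`min c (m + 2 + e)` between outer vertices, `m + 1 + e` between an outer and an inner one and
`m + 3e` between inner ones. Walks along the rims and spokes give the upper bounds. For the lower
bounds, this function of the second vertex grows by at most one along every edge: an inner edge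
moves `c` by at most two and, `n` being even, keeps its parity. For `n = 4k + 2` the antipodal
offset `2k + 1` gives `k + 3` for both kinds of pairs once `k ≥ 2`, and no offset gives more. -/

open SimpleGraph Sum

namespace SimpleGraph

variable {V : Type*} {G : SimpleGraph V}

lemma edist_le_add_of_le {x y z : V} {a b : ℕ} (hxy : G.edist x y ≤ a) (hyz : G.edist y z ≤ b) :
    G.edist x z ≤ (a + b : ℕ) := by
  push_cast
  exact G.edist_triangle.trans (add_le_add hxy hyz)

lemma Walk.le_add_length_of_lipschitz {φ : V → ℕ} (hφ : ∀ y z, G.Adj y z → φ z ≤ φ y + 1)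
    {x y : V} (p : G.Walk x y) : φ y ≤ φ x + p.length := by
  induction p with
  | nil => simp
  | cons h _ ih =>
    have := hφ _ _ h
    rw [Walk.length_cons]
    omega

lemma dist_eq_of_lipschitz {φ : V → ℕ} (hφ : ∀ y z, G.Adj y z → φ z ≤ φ y + 1) {x y : V}
    (hx : φ x = 0) (hy : G.edist x y ≤ φ y) : G.dist x y = φ y := by
  have hreach : G.Reachable x y :=
    reachable_of_edist_ne_top (ne_top_of_le_ne_top (ENat.natCast_ne_top _) hy)
  obtain ⟨p, hp⟩ := hreach.exists_walk_length_eq_dist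
  have hlower := p.le_add_length_of_lipschitz hφ
  have hupper : G.dist x y ≤ φ y := ENat.toNat_le_of_le_natCast hy
  omega

lemma diam_eq_of_edist_le {m : ℕ} (h : ∀ x y, G.edist x y ≤ m) {x y : V} (hxy : G.dist x y = m) :
    G.diam = m := by
  have hediam : G.ediam ≤ m := ediam_le_of_edist_le h
  refine le_antisymm (ENat.toNat_le_of_le_natCast hediam) ?_
  exact hxy ▸ dist_le_diam (ne_top_of_le_ne_top (ENat.natCast_ne_top _) hediam)

end SimpleGraph

namespace ZMod

variable {n : ℕ}

def cyclicDist (i j : ZMod n) : ℕ := (j - i).valMinAbs.natAbs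

lemma cyclicDist_comm (i j : ZMod n) : cyclicDist i j = cyclicDist j i := by
  rw [cyclicDist, cyclicDist, ← neg_sub, natAbs_valMinAbs_neg]

lemma cyclicDist_triangle (a i j : ZMod n) :
    cyclicDist a j ≤ cyclicDist a i + cyclicDist i j := by
  have h := natAbs_valMinAbs_add_le (i - a) (j - i)
  rw [sub_add_sub_cancel'] at h
  exact h.trans (Int.natAbs_add_le _ _)

lemma exists_eq_add_cyclicDist (i j : ZMod n) :
    j = i + cyclicDist i j ∨ i = j + cyclicDist i j := by
  have h := coe_valMinAbs (j - i)
  rcases Int.natAbs_eq (j - i).valMinAbs with hc | hc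
  · rw [hc, Int.cast_natCast] at h
    left
    rw [cyclicDist, h]
    ring
  · rw [hc, Int.cast_neg, Int.cast_natCast] at h
    right
    rw [cyclicDist]
    linear_combination h

lemma cyclicDist_add_natCast_of_le_half (i : ZMod n) {s : ℕ} (hs : s ≤ n / 2) :
    cyclicDist i (i + s) = s := by
  rw [cyclicDist, add_sub_cancel_left, valMinAbs_natCast_of_le_half hs, Int.natAbs_natCast]

lemma cyclicDist_add_two_mod_two (hn : Even n) (a i : ZMod n) :
    cyclicDist a (i + 2) % 2 = cyclicDist a i % 2 := by
  have h2 : 2 ∣ n := hn.two_dvd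
  have hcast (j : ZMod n) : (cyclicDist a j : ZMod 2) = castHom h2 (ZMod 2) (j - a) := by
    conv_rhs => rw [← coe_valMinAbs (j - a), map_intCast]
    simp [cyclicDist]
  rw [← natCast_eq_natCast_iff', hcast, hcast, add_sub_right_comm, map_add, map_ofNat]
  exact add_eq_left.2 rfl

variable [NeZero n]

lemma cyclicDist_add_natCast_le (i : ZMod n) (s : ℕ) : cyclicDist i (i + s) ≤ s := by
  rw [cyclicDist, add_sub_cancel_left, valMinAbs_natAbs_eq_min, val_natCast]
  exact (min_le_left _ _).trans (Nat.mod_le _ _)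

lemma cyclicDist_le_add_of_eq_add_or_eq_add {a i j : ZMod n} {s : ℕ}
    (h : j = i + (s : ZMod n) ∨ i = j + (s : ZMod n)) : cyclicDist a j ≤ cyclicDist a i + s := by
  have hij : cyclicDist i j ≤ s := by
    rcases h with rfl | rfl
    · exact cyclicDist_add_natCast_le i s
    · rw [cyclicDist_comm]
      exact cyclicDist_add_natCast_le j s
  exact (cyclicDist_triangle a i j).trans (by omega)

lemma cyclicDist_le_half (i j : ZMod n) : cyclicDist i j ≤ n / 2 :=
  natAbs_valMinAbs_le _

end ZMod

namespace GP

open ZMod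

variable {n : ℕ}

lemma edist_inl_inr_le_one (i : ZMod n) : (GP n 2).edist (inl i) (inr i) ≤ 1 :=
  edist_le_one_iff_adj_or_eq.2 (Or.inl rfl)

lemma edist_inl_add_one_le_one (i : ZMod n) : (GP n 2).edist (inl i) (inl (i + 1)) ≤ 1 := by
  by_cases h : i = i + 1
  · exact edist_le_one_iff_adj_or_eq.2 (Or.inr (congrArg inl h))
  · exact edist_le_one_iff_adj_or_eq.2 (Or.inl ⟨h, Or.inl rfl⟩)

lemma edist_inr_add_two_le_one (i : ZMod n) : (GP n 2).edist (inr i) (inr (i + 2)) ≤ 1 := by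
  by_cases h : i = i + 2
  · exact edist_le_one_iff_adj_or_eq.2 (Or.inr (congrArg inr h))
  · exact edist_le_one_iff_adj_or_eq.2 (Or.inl ⟨h, Or.inl (by norm_num)⟩)

lemma edist_inl_add_natCast_le (i : ZMod n) (m : ℕ) :
    (GP n 2).edist (inl i) (inl (i + m)) ≤ m := by
  induction m with
  | zero => simp
  | succ m ih =>
    rw [Nat.cast_succ, ← add_assoc]
    exact edist_le_add_of_le ih (by exact_mod_cast edist_inl_add_one_le_one _)

lemma edist_inr_add_two_mul_le (i : ZMod n) (m : ℕ) :
    (GP n 2).edist (inr i) (inr (i + (2 * m : ℕ))) ≤ m := by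
  induction m with
  | zero => simp
  | succ m ih =>
    rw [Nat.mul_succ, Nat.cast_add, Nat.cast_two, ← add_assoc]
    exact edist_le_add_of_le ih (by exact_mod_cast edist_inr_add_two_le_one _)

def uuDist (c : ℕ) : ℕ := min c (c / 2 + 2 + c % 2)

def uvDist (c : ℕ) : ℕ := c / 2 + 1 + c % 2

def vvDist (c : ℕ) : ℕ := c / 2 + 3 * (c % 2)

lemma edist_inl_inr_add_le (i : ZMod n) (c : ℕ) :
    (GP n 2).edist (inl i) (inr (i + c)) ≤ uvDist c := by
  have hc : i + c = (i + (c % 2 : ℕ)) + (2 * (c / 2) : ℕ) := by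
    rw [add_assoc, ← Nat.cast_add, Nat.mod_add_div]
  rw [hc, show uvDist c = c % 2 + 1 + c / 2 by unfold uvDist; omega]
  exact edist_le_add_of_le (edist_le_add_of_le (edist_inl_add_natCast_le i _)
    (by exact_mod_cast edist_inl_inr_le_one _)) (edist_inr_add_two_mul_le _ _)

lemma edist_inr_inl_add_le (i : ZMod n) (c : ℕ) :
    (GP n 2).edist (inr i) (inl (i + c)) ≤ uvDist c := by
  have hc : i + c = (i + (2 * (c / 2) : ℕ)) + (c % 2 : ℕ) := by
    rw [add_assoc, ← Nat.cast_add, Nat.div_add_mod]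
  rw [hc, uvDist]
  refine edist_le_add_of_le (edist_le_add_of_le (edist_inr_add_two_mul_le i _) ?_)
    (edist_inl_add_natCast_le _ _)
  rw [edist_comm]
  exact_mod_cast edist_inl_inr_le_one _

lemma edist_inl_inl_add_le (i : ZMod n) (c : ℕ) :
    (GP n 2).edist (inl i) (inl (i + c)) ≤ uuDist c := by
  have h := edist_le_add_of_le (by exact_mod_cast edist_inl_inr_le_one i) (edist_inr_inl_add_le i c)
  rcases min_choice c (c / 2 + 2 + c % 2) with hmin | hmin <;> rw [uuDist, hmin]
  · exact edist_inl_add_natCast_le i c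
  · exact h.trans (by rw [uvDist]; exact_mod_cast (by omega))

lemma edist_inr_inr_add_le (i : ZMod n) (c : ℕ) :
    (GP n 2).edist (inr i) (inr (i + c)) ≤ vvDist c := by
  obtain ⟨m, rfl | rfl⟩ := Nat.even_or_odd' c
  · have h := edist_inr_add_two_mul_le i m
    exact h.trans (by rw [vvDist]; exact_mod_cast (by omega))
  · have h := edist_le_add_of_le (by rw [edist_comm]; exact_mod_cast edist_inl_inr_le_one i)
      (edist_inl_inr_add_le i (2 * m + 1))
    exact h.trans (by rw [vvDist, uvDist]; exact_mod_cast (by omega))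

def twoDist : ZMod n ⊕ ZMod n → ZMod n ⊕ ZMod n → ℕ
  | inl i, inl j => uuDist (cyclicDist i j)
  | inl i, inr j => uvDist (cyclicDist i j)
  | inr i, inl j => uvDist (cyclicDist i j)
  | inr i, inr j => vvDist (cyclicDist i j)

lemma edist_le_twoDist (x y : ZMod n ⊕ ZMod n) : (GP n 2).edist x y ≤ twoDist x y := by
  rcases x with i | i <;> rcases y with j | j <;> simp only [twoDist] <;>
    rcases exists_eq_add_cyclicDist i j with h | h <;>
    generalize cyclicDist i j = c at h ⊢ <;> subst h <;>
    first
    | exact edist_inl_inl_add_le _ _ | exact edist_comm.trans_le (edist_inl_inl_add_le _ _)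
    | exact edist_inl_inr_add_le _ _ | exact edist_comm.trans_le (edist_inr_inl_add_le _ _)
    | exact edist_inr_inl_add_le _ _ | exact edist_comm.trans_le (edist_inl_inr_add_le _ _)
    | exact edist_inr_inr_add_le _ _ | exact edist_comm.trans_le (edist_inr_inr_add_le _ _)

lemma twoDist_le_add_one_of_adj (hn : Even n) [NeZero n] (x : ZMod n ⊕ ZMod n)
    {y z : ZMod n ⊕ ZMod n} (h : (GP n 2).Adj y z) : twoDist x z ≤ twoDist x y + 1 := by
  rcases y with i | i <;> rcases z with j | j
  · have hij (a : ZMod n) : cyclicDist a j ≤ cyclicDist a i + 1 :=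
      cyclicDist_le_add_of_eq_add_or_eq_add (s := 1) (by simpa using h.2)
    rcases x with a | a <;> simp only [twoDist, uuDist, uvDist] <;> grind [hij a]
  · obtain rfl : i = j := h
    rcases x with a | a <;> simp only [twoDist, uuDist, uvDist, vvDist] <;> omega
  · obtain rfl : i = j := h
    rcases x with a | a <;> simp only [twoDist, uuDist, uvDist, vvDist] <;> omega
  · have hij (a : ZMod n) : cyclicDist a j ≤ cyclicDist a i + 2 :=
      cyclicDist_le_add_of_eq_add_or_eq_add h.2
    have hpar (a : ZMod n) : cyclicDist a j % 2 = cyclicDist a i % 2 := by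
      rcases h.2 with rfl | rfl
      · exact_mod_cast cyclicDist_add_two_mod_two hn a i
      · exact_mod_cast (cyclicDist_add_two_mod_two hn a j).symm
    rcases x with a | a <;> simp only [twoDist, uvDist, vvDist] <;> grind [hij a, hpar a]

theorem dist_eq_twoDist (hn : Even n) [NeZero n] (x y : ZMod n ⊕ ZMod n) :
    (GP n 2).dist x y = twoDist x y := by
  refine dist_eq_of_lipschitz (fun _ _ => twoDist_le_add_one_of_adj hn x) ?_ (edist_le_twoDist x y)
  rcases x with a | a <;> simp [twoDist, cyclicDist, uuDist, vvDist]

end GP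

/-- In `GP (4k+2) 2` with `k ≥ 2`: `d(uᵢ, u_{i+2k+1}) = d(vᵢ, v_{i+2k+1}) = k+3` for
`0 ≤ i ≤ 2k`, and this equals the diameter. -/
theorem stmt_4 (k : ℕ) (hk : 2 ≤ k) :
    (∀ i : ℕ, i ≤ 2*k →
      (GP (4*k+2) 2).dist (Sum.inl ((i : ℕ) : ZMod (4*k+2)))
        (Sum.inl ((i + 2*k + 1 : ℕ) : ZMod (4*k+2))) = k + 3 ∧
      (GP (4*k+2) 2).dist (Sum.inr ((i : ℕ) : ZMod (4*k+2)))
        (Sum.inr ((i + 2*k + 1 : ℕ) : ZMod (4*k+2))) = k + 3) ∧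
    (GP (4*k+2) 2).diam = k + 3 := by
  have : NeZero (4*k+2) := ⟨by omega⟩
  have hn : Even (4*k+2) := ⟨2*k+1, by ring⟩
  have hhalf : (4*k+2) / 2 = 2*k+1 := by omega
  have hanti (a : ZMod (4*k+2)) :
      (GP (4*k+2) 2).dist (inl a) (inl (a + (2*k+1 : ℕ))) = k + 3 ∧
      (GP (4*k+2) 2).dist (inr a) (inr (a + (2*k+1 : ℕ))) = k + 3 := by
    simp only [GP.dist_eq_twoDist hn, GP.twoDist,
      ZMod.cyclicDist_add_natCast_of_le_half a hhalf.ge, GP.uuDist, GP.vvDist]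
    omega
  have hbound (x y : ZMod (4*k+2) ⊕ ZMod (4*k+2)) : GP.twoDist x y ≤ k + 3 := by
    have := ZMod.cyclicDist_le_half (n := 4*k+2)
    rcases x with a | a <;> rcases y with b | b <;>
      simp only [GP.twoDist, GP.uuDist, GP.uvDist, GP.vvDist] <;> grind [this a b]
  refine ⟨fun i _ => ?_, diam_eq_of_edist_le
    (fun x y => (GP.edist_le_twoDist x y).trans (by exact_mod_cast hbound x y)) (hanti 0).1⟩
  rw [show i + 2*k + 1 = i + (2*k+1) by ring, Nat.cast_add]
  exact hanti i
end

section
/- For every k ≥ 3, the set S = {u_i : 0 ≤ i ≤ 2k−1} ∪ {u_{2k+2i+1} : 0 ≤ i ≤ k−1} ∪ {v_{2i+1} : 0 ≤ i ≤ 2k−1} is a strong resolving set of the generalized Petersen graph GP(4k, 2). -/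
/-! In `GP n 2` with `n` even, the distance between two vertices depends only on their kinds and
on the cyclic offset `c` of their indices (`GP.distFormula`). To identify a candidate distance to a
target with the graph distance it suffices that it vanishes only at the target, is 1-Lipschitz
along edges and strictly decreases along some edge at every other vertex; for `distFormula` this
comes down to `c` changing by exactly one along an outer edge and by `0` or `2` along an inner edge.

The vertices outside `S` are the `u_i` with `i` even and `i ≥ 2k` and the `v_i` with `i` even, so
two of them are at even offset `c ≤ 2k`. If `c < 2k`, the vertex of the same kind as the first
one, one step further away from the second, has odd index, so it lies in `S`, and the formula puts
the first vertex on a geodesic from it to the second. If `c = 2k`, and also for two inner vertices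
one of which has index below `2k`, the outer vertex at such an index lies in `S` and resolves the
pair through its spoke. -/

open SimpleGraph Sum

theorem SimpleGraph.dist_eq_of_lipschitz_of_descent {V : Type*} {G : SimpleGraph V} {y : V}
    (f : V → ℕ) (hf : ∀ x, f x = 0 ↔ x = y) (hlip : ∀ x x', G.Adj x x' → f x ≤ f x' + 1)
    (hdesc : ∀ x, x ≠ y → ∃ x', G.Adj x x' ∧ f x' < f x) (x : V) :
    G.dist x y = f x := by
  have le_length : ∀ {x} (p : G.Walk x y), f x ≤ f y + p.length := by
    intro x p
    clear hf hdesc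
    induction p with
    | nil => simp
    | cons h p ih => have := hlip _ _ h; rw [Walk.length_cons]; omega
  have exists_walk : ∀ N x, f x = N → ∃ p : G.Walk x y, p.length ≤ N := by
    intro N
    induction N using Nat.strong_induction_on with
    | _ N ih =>
      intro x hx
      by_cases hxy : x = y
      · subst hxy; exact ⟨.nil, by simp⟩
      obtain ⟨x', hadj, hlt⟩ := hdesc x hxy
      obtain ⟨p, hp⟩ := ih _ (hx ▸ hlt) x' rfl
      exact ⟨.cons hadj p, by rw [Walk.length_cons]; omega⟩
  obtain ⟨p, hp⟩ := exists_walk _ x rfl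
  obtain ⟨q, hq⟩ := p.reachable.exists_walk_length_eq_dist
  have := dist_le p
  have := le_length q
  rw [(hf y).2 rfl] at this
  omega

lemma StronglyResolves.symm {V : Type*} {G : SimpleGraph V} {w u v : V}
    (h : StronglyResolves G w u v) : StronglyResolves G w v u :=
  Or.symm h

lemma isStrongResolvingSet_of_forall_notMem {V : Type*} {G : SimpleGraph V} {S : Set V}
    (h : ∀ u v, u ∉ S → v ∉ S → ∃ w ∈ S, StronglyResolves G w u v) :
    IsStrongResolvingSet G S := by
  intro u v _
  by_cases hu : u ∈ S
  · exact ⟨u, hu, .inr (by rw [dist_self, zero_add])⟩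
  by_cases hv : v ∈ S
  · exact ⟨v, hv, .inl (by rw [dist_self, zero_add])⟩
  exact h u v hu hv

namespace ZMod

variable {n : ℕ}

def cycAbs (d : ZMod n) : ℕ := d.valMinAbs.natAbs

lemma cycAbs_neg (d : ZMod n) : (-d).cycAbs = d.cycAbs := natAbs_valMinAbs_neg d

lemma cycAbs_eq_zero {d : ZMod n} : d.cycAbs = 0 ↔ d = 0 := by
  simp [cycAbs, valMinAbs_eq_zero]

lemma cycAbs_zero : (0 : ZMod n).cycAbs = 0 := cycAbs_eq_zero.2 rfl

lemma cycAbs_natCast {m : ℕ} (h : 2 * m ≤ n) : (m : ZMod n).cycAbs = m := by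
  rw [cycAbs, valMinAbs_natCast_of_le_half (by omega), Int.natAbs_natCast]

lemma cycAbs_intCast {z : ℤ} (h : 2 * z.natAbs ≤ n) : (z : ZMod n).cycAbs = z.natAbs := by
  rcases Int.natAbs_eq z with hz | hz <;> rw [hz]
  · rw [Int.cast_natCast, cycAbs_natCast h, Int.natAbs_natCast]
  · rw [Int.cast_neg, Int.cast_natCast, cycAbs_neg, cycAbs_natCast h, Int.natAbs_neg,
      Int.natAbs_natCast]

lemma cycAbs_sub_sub_of_eq_sign_mul {i j : ZMod n} {ε : ℤ} (hε : ε = 1 ∨ ε = -1)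
    (h : j - i = ((ε * (j - i).cycAbs : ℤ) : ZMod n)) (hc : 2 * ((j - i).cycAbs + 1) ≤ n) :
    (i - (i - ε)).cycAbs = 1 ∧ (j - (i - ε)).cycAbs = (j - i).cycAbs + 1 := by
  have h₁ : i - (i - ε) = ((ε : ℤ) : ZMod n) := by ring
  have h₂ : j - (i - ε) = ((ε * ((j - i).cycAbs + 1) : ℤ) : ZMod n) := by
    push_cast at h ⊢; linear_combination h
  rw [h₁, h₂]
  rcases hε with rfl | rfl <;> constructor <;> rw [cycAbs_intCast (by omega)] <;> omega

variable [NeZero n]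

lemma two_mul_cycAbs_le (d : ZMod n) : 2 * d.cycAbs ≤ n := by
  have := natAbs_valMinAbs_le d
  unfold cycAbs; omega

lemma exists_eq_intCast_natAbs_eq_cycAbs (d : ZMod n) :
    ∃ v : ℤ, d = v ∧ d.cycAbs = v.natAbs ∧ 2 * v.natAbs ≤ n :=
  ⟨d.valMinAbs, (coe_valMinAbs d).symm, rfl, two_mul_cycAbs_le d⟩

lemma cycAbs_add_one (hn : Even n) (d : ZMod n) :
    (d + 1).cycAbs = d.cycAbs + 1 ∨ (d + 1).cycAbs + 1 = d.cycAbs := by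
  obtain ⟨r, hr⟩ := hn
  obtain ⟨v, rfl, hv, hle⟩ := exists_eq_intCast_natAbs_eq_cycAbs d
  rw [hv]
  have := NeZero.pos n
  by_cases hanti : 2 * v = n
  · rw [show (v : ZMod n) + 1 = ((v + 1 - n : ℤ) : ZMod n) by simp,
      cycAbs_intCast (z := v + 1 - n) (by omega)]
    omega
  · rw [show (v : ZMod n) + 1 = ((v + 1 : ℤ) : ZMod n) by push_cast; ring,
      cycAbs_intCast (by omega)]
    omega

lemma cycAbs_step_one (hn : Even n) {a b : ZMod n} (h : b = a + 1 ∨ a = b + 1) (t : ZMod n) :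
    (t - a).cycAbs = (t - b).cycAbs + 1 ∨ (t - b).cycAbs = (t - a).cycAbs + 1 := by
  rcases h with rfl | rfl
  · have := cycAbs_add_one hn (t - (a + 1))
    rw [show t - (a + 1) + 1 = t - a by ring] at this
    omega
  · have := cycAbs_add_one hn (t - (b + 1))
    rw [show t - (b + 1) + 1 = t - b by ring] at this
    omega

lemma cycAbs_step_two (hn : Even n) {a b : ZMod n} (h : b = a + 2 ∨ a = b + 2) (t : ZMod n) :
    (t - a).cycAbs = (t - b).cycAbs + 2 ∨ (t - a).cycAbs = (t - b).cycAbs ∨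
      (t - b).cycAbs = (t - a).cycAbs + 2 := by
  obtain ⟨c, hac, hcb⟩ : ∃ c, (c = a + 1 ∨ a = c + 1) ∧ (b = c + 1 ∨ c = b + 1) := by
    rcases h with rfl | rfl
    · exact ⟨a + 1, .inl rfl, .inl (by ring)⟩
    · exact ⟨b + 1, .inr (by ring), .inr rfl⟩
  have := cycAbs_step_one hn hac t
  have := cycAbs_step_one hn hcb t
  omega

lemma exists_cycAbs_sub_add_eq (t a : ZMod n) {m : ℕ} (hm : m ≤ (t - a).cycAbs) :
    ∃ b, (b = a + m ∨ a = b + m) ∧ (t - b).cycAbs + m = (t - a).cycAbs := by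
  obtain ⟨v, hv, hcyc, hle⟩ := exists_eq_intCast_natAbs_eq_cycAbs (t - a)
  rcases le_or_gt 0 v with hpos | hneg
  · refine ⟨a + m, .inl rfl, ?_⟩
    rw [show t - (a + m) = ((v - m : ℤ) : ZMod n) by push_cast; rw [← hv]; ring,
      cycAbs_intCast (by omega)]
    omega
  · refine ⟨a - m, .inr (by ring), ?_⟩
    rw [show t - (a - m) = ((v + m : ℤ) : ZMod n) by push_cast; rw [← hv]; ring,
      cycAbs_intCast (by omega)]
    omega

lemma exists_eq_sign_mul_cycAbs (d : ZMod n) :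
    ∃ ε : ℤ, (ε = 1 ∨ ε = -1) ∧ d = ((ε * d.cycAbs : ℤ) : ZMod n) := by
  obtain ⟨v, rfl, hv, -⟩ := exists_eq_intCast_natAbs_eq_cycAbs d
  rw [hv]
  rcases Int.natAbs_eq v with h | h
  · exact ⟨1, .inl rfl, by rw [one_mul, ← h]⟩
  · exact ⟨-1, .inr rfl, by rw [neg_one_mul, ← h]⟩

lemma even_val_iff_castHom_eq_zero (hn : 2 ∣ n) (a : ZMod n) :
    Even a.val ↔ castHom hn (ZMod 2) a = 0 := by
  rw [castHom_apply, cast_eq_val, natCast_eq_zero_iff_even]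

lemma odd_val_sub_of_even (hn : Even n) {i : ZMod n} (hi : Even i.val) {ε : ℤ}
    (hε : ε = 1 ∨ ε = -1) : Odd (i - ε).val := by
  have hn2 := even_iff_two_dvd.1 hn
  rw [even_val_iff_castHom_eq_zero hn2] at hi
  rw [← Nat.not_even_iff_odd, even_val_iff_castHom_eq_zero hn2, map_sub, hi, map_intCast]
  rcases hε with rfl | rfl <;> decide

lemma even_cycAbs_sub (hn : Even n) {i j : ZMod n} (hi : Even i.val) (hj : Even j.val) :
    Even (j - i).cycAbs := by
  have hn2 := even_iff_two_dvd.1 hn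
  obtain ⟨ε, hε, h⟩ := exists_eq_sign_mul_cycAbs (j - i)
  rw [even_val_iff_castHom_eq_zero hn2] at hi hj
  have := congrArg (castHom hn2 (ZMod 2)) h
  rw [map_sub, hi, hj, map_intCast, sub_zero, eq_comm] at this
  push_cast at this
  rcases hε with rfl | rfl <;> simpa [natCast_eq_zero_iff_even] using this

lemma exists_odd_val_one_step_away (hn : Even n) {i j : ZMod n} (hi : Even i.val)
    (hj : 2 * (j - i).cycAbs ≠ n) :
    ∃ i', Odd i'.val ∧ (i - i').cycAbs = 1 ∧ (j - i').cycAbs = (j - i).cycAbs + 1 := by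
  obtain ⟨ε, hε, h⟩ := exists_eq_sign_mul_cycAbs (j - i)
  have := two_mul_cycAbs_le (j - i)
  obtain ⟨r, hr⟩ := hn
  exact ⟨i - ε, odd_val_sub_of_even ⟨r, hr⟩ hi hε,
    cycAbs_sub_sub_of_eq_sign_mul hε h (by omega)⟩

lemma eq_add_cycAbs_of_two_mul_cycAbs_eq {i j : ZMod n} (h : 2 * (j - i).cycAbs = n) :
    j = i + (j - i).cycAbs := by
  obtain ⟨ε, hε, hδ⟩ := exists_eq_sign_mul_cycAbs (j - i)
  have hc : ((j - i).cycAbs : ZMod n) + (j - i).cycAbs = 0 := by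
    rw [← Nat.cast_add, ← two_mul, h, natCast_self]
  push_cast at hδ
  rcases hε with rfl | rfl
  · linear_combination hδ
  · linear_combination hδ - hc

lemma two_mul_val_lt_of_two_mul_cycAbs_eq {i j : ZMod n} (h : 2 * (j - i).cycAbs = n)
    (hi : n ≤ 2 * i.val) : 2 * j.val < n := by
  have hval : ((j - i).cycAbs : ZMod n).val = (j - i).cycAbs :=
    val_natCast_of_lt (by have := NeZero.pos n; omega)
  rw [eq_add_cycAbs_of_two_mul_cycAbs_eq h, val_add_of_le (by rw [hval]; omega), hval]
  have := i.val_lt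
  omega

lemma two_mul_cycAbs_sub_ne {i j : ZMod n} (hi : n ≤ 2 * i.val) (hj : n ≤ 2 * j.val) :
    2 * (j - i).cycAbs ≠ n := fun h ↦ by
  have := two_mul_val_lt_of_two_mul_cycAbs_eq h hi
  omega

end ZMod

namespace GP

variable {n : ℕ}

open ZMod (cycAbs cycAbs_eq_zero cycAbs_zero exists_cycAbs_sub_add_eq)

lemma adj_inl_inl {a b : ZMod n} :
    (GP n 2).Adj (inl a) (inl b) ↔ a ≠ b ∧ (b = a + 1 ∨ a = b + 1) := Iff.rfl

lemma adj_inr_inr {a b : ZMod n} :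
    (GP n 2).Adj (inr a) (inr b) ↔ a ≠ b ∧ (b = a + 2 ∨ a = b + 2) := by
  simp [GP]

lemma adj_inl_inr {a b : ZMod n} : (GP n 2).Adj (inl a) (inr b) ↔ a = b := Iff.rfl

lemma adj_inr_inl {a b : ZMod n} : (GP n 2).Adj (inr a) (inl b) ↔ a = b := Iff.rfl

/-- Inner vertices at odd offset are joined only through two spokes and an outer edge. -/
def distFormula : ZMod n ⊕ ZMod n → ZMod n ⊕ ZMod n → ℕ
  | inl a, inl b => min (b - a).cycAbs (((b - a).cycAbs + 1) / 2 + 2)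
  | inl a, inr b | inr a, inl b => ((b - a).cycAbs + 1) / 2 + 1
  | inr a, inr b =>
    if (b - a).cycAbs % 2 = 0 then (b - a).cycAbs / 2 else ((b - a).cycAbs + 1) / 2 + 2

lemma distFormula_eq_zero_iff {x y : ZMod n ⊕ ZMod n} : distFormula x y = 0 ↔ x = y := by
  rcases x with a | a <;> rcases y with b | b <;>
    simp only [distFormula, inl.injEq, inr.injEq, reduceCtorEq, eq_comm (a := a),
      ← sub_eq_zero (a := b), ← cycAbs_eq_zero]
  · constructor <;> intro <;> omega
  · split_ifs
    · constructor <;> intro <;> omega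
    · simp only [false_iff]; omega

variable [NeZero n]

lemma distFormula_le_of_adj (hn : Even n) {x x' : ZMod n ⊕ ZMod n} (h : (GP n 2).Adj x x')
    (y : ZMod n ⊕ ZMod n) : distFormula x y ≤ distFormula x' y + 1 := by
  rcases x with a | a <;> rcases x' with b | b <;> rcases y with t | t <;>
    simp only [adj_inl_inl, adj_inr_inr, adj_inl_inr, adj_inr_inl] at h
  · have := ZMod.cycAbs_step_one hn h.2 t
    simp only [distFormula]; omega
  · have := ZMod.cycAbs_step_one hn h.2 t
    simp only [distFormula]; omega
  · subst h; simp only [distFormula]; omega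
  · subst h; simp only [distFormula]; split_ifs <;> omega
  · subst h; simp only [distFormula]; omega
  · subst h; simp only [distFormula]; split_ifs <;> omega
  · have := ZMod.cycAbs_step_two hn h.2 t
    simp only [distFormula]; omega
  · have := ZMod.cycAbs_step_two hn h.2 t
    simp only [distFormula]; split_ifs <;> omega

lemma exists_adj_inl_cycAbs_lt (t a : ZMod n) (h : (t - a).cycAbs ≠ 0) :
    ∃ b, (GP n 2).Adj (inl a) (inl b) ∧ (t - b).cycAbs + 1 = (t - a).cycAbs := by
  obtain ⟨b, hab, hb⟩ := exists_cycAbs_sub_add_eq t a (m := 1) (by omega)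
  refine ⟨b, ⟨?_, by simpa using hab⟩, hb⟩
  rintro rfl
  omega

lemma exists_adj_inr_cycAbs_lt (t a : ZMod n) (h : 2 ≤ (t - a).cycAbs) :
    ∃ b, (GP n 2).Adj (inr a) (inr b) ∧ (t - b).cycAbs + 2 = (t - a).cycAbs := by
  obtain ⟨b, hab, hb⟩ := exists_cycAbs_sub_add_eq t a (m := 2) h
  refine ⟨b, adj_inr_inr.2 ⟨?_, by simpa using hab⟩, hb⟩
  rintro rfl
  omega

lemma exists_adj_distFormula_lt {x y : ZMod n ⊕ ZMod n} (h : x ≠ y) :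
    ∃ x', (GP n 2).Adj x x' ∧ distFormula x' y < distFormula x y := by
  have h0 := mt distFormula_eq_zero_iff.1 h
  rcases x with a | a <;> rcases y with t | t <;> simp only [distFormula] at h0
  · by_cases hc : (t - a).cycAbs ≤ 5
    · obtain ⟨b, hab, hb⟩ := exists_adj_inl_cycAbs_lt t a (by omega)
      exact ⟨inl b, hab, by simp only [distFormula]; omega⟩
    · exact ⟨inr a, rfl, by simp only [distFormula]; omega⟩
  · by_cases hc : (t - a).cycAbs % 2 = 0
    · exact ⟨inr a, rfl, by simp only [distFormula, if_pos hc]; omega⟩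
    · obtain ⟨b, hab, hb⟩ := exists_adj_inl_cycAbs_lt t a (by omega)
      exact ⟨inl b, hab, by simp only [distFormula]; omega⟩
  · by_cases hc : 2 ≤ (t - a).cycAbs
    · obtain ⟨b, hab, hb⟩ := exists_adj_inr_cycAbs_lt t a hc
      exact ⟨inr b, hab, by simp only [distFormula]; omega⟩
    · exact ⟨inl a, rfl, by simp only [distFormula]; omega⟩
  · by_cases hc : (t - a).cycAbs % 2 = 0
    · rw [if_pos hc] at h0
      obtain ⟨b, hab, hb⟩ := exists_adj_inr_cycAbs_lt t a (by omega)
      exact ⟨inr b, hab, by simp only [distFormula]; split_ifs <;> omega⟩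
    · exact ⟨inl a, rfl, by simp only [distFormula, if_neg hc]; omega⟩

theorem dist_eq_distFormula (hn : Even n) (x y : ZMod n ⊕ ZMod n) :
    (GP n 2).dist x y = distFormula x y :=
  dist_eq_of_lipschitz_of_descent (fun x ↦ distFormula x y) (fun _ ↦ distFormula_eq_zero_iff)
    (fun _ _ h ↦ distFormula_le_of_adj hn h y) (fun _ h ↦ exists_adj_distFormula_lt h) x

variable {i i' j : ZMod n}

lemma stronglyResolves_inl_inl (hn : Even n) (h₁ : (i - i').cycAbs = 1)
    (h₂ : (j - i').cycAbs = (j - i).cycAbs + 1) (he : Even (j - i).cycAbs) :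
    StronglyResolves (GP n 2) (inl i') (inl i) (inl j) := by
  have := Nat.even_iff.1 he
  right
  simp only [dist_eq_distFormula hn, distFormula, h₁, h₂]
  omega

lemma stronglyResolves_inl_inr (hn : Even n) (h₁ : (i - i').cycAbs = 1)
    (h₂ : (j - i').cycAbs = (j - i).cycAbs + 1) (he : Even (j - i).cycAbs) :
    StronglyResolves (GP n 2) (inl i') (inl i) (inr j) := by
  have := Nat.even_iff.1 he
  right
  simp only [dist_eq_distFormula hn, distFormula, h₁, h₂]
  omega

lemma stronglyResolves_inr_inr (hn : Even n) (h₁ : (i - i').cycAbs = 1)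
    (h₂ : (j - i').cycAbs = (j - i).cycAbs + 1) (he : Even (j - i).cycAbs) :
    StronglyResolves (GP n 2) (inr i') (inr i) (inr j) := by
  have := Nat.even_iff.1 he
  right
  -- the parity test at offset `1` is decided here, as `omega` does not use a hypothesis `False`
  simp only [dist_eq_distFormula hn, distFormula, h₁, h₂, Nat.reduceMod, one_ne_zero,
    ↓reduceIte]
  split_ifs <;> omega

lemma stronglyResolves_inl_inr_of_antipodal (hn : Even n) (h : 2 * (j - i).cycAbs = n)
    (h8 : 8 ≤ n) : StronglyResolves (GP n 2) (inl j) (inl i) (inr j) := by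
  have hji : (i - j).cycAbs = (j - i).cycAbs := by rw [← neg_sub, ZMod.cycAbs_neg]
  left
  simp only [dist_eq_distFormula hn, distFormula, hji, sub_self, cycAbs_zero]
  omega

lemma stronglyResolves_inl_inr_inr (hn : Even n) (he : Even (j - i).cycAbs) :
    StronglyResolves (GP n 2) (inl i) (inr i) (inr j) := by
  have := Nat.even_iff.1 he
  right
  simp only [dist_eq_distFormula hn, distFormula, sub_self, cycAbs_zero, if_pos this]
  omega

end GP

section ResolvingSet

variable {k : ℕ} [NeZero k]

open GP ZMod

def resolvingSet (k : ℕ) : Set (ZMod (4 * k) ⊕ ZMod (4 * k)) :=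
  {x | ∃ i : ℕ, i ≤ 2*k - 1 ∧ x = Sum.inl ((i : ℕ) : ZMod (4*k))} ∪
  {x | ∃ i : ℕ, i ≤ k - 1 ∧ x = Sum.inl ((2*k + 2*i + 1 : ℕ) : ZMod (4*k))} ∪
  {x | ∃ i : ℕ, i ≤ 2*k - 1 ∧ x = Sum.inr ((2*i + 1 : ℕ) : ZMod (4*k))}

lemma even_four_mul (k : ℕ) : Even (4 * k) := ⟨2 * k, by ring⟩

lemma inl_mem_resolvingSet_of_val_lt {a : ZMod (4 * k)} (h : a.val < 2 * k) :
    inl a ∈ resolvingSet k :=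
  .inl (.inl ⟨a.val, by omega, by rw [natCast_zmod_val]⟩)

lemma inl_mem_resolvingSet_of_odd {a : ZMod (4 * k)} (h : Odd a.val) : inl a ∈ resolvingSet k := by
  rcases lt_or_ge a.val (2 * k) with hlt | hge
  · exact inl_mem_resolvingSet_of_val_lt hlt
  obtain ⟨r, hr⟩ := h
  have := a.val_lt
  refine .inl (.inr ⟨r - k, by omega, ?_⟩)
  rw [show 2 * k + 2 * (r - k) + 1 = a.val by omega, natCast_zmod_val]

lemma inr_mem_resolvingSet_of_odd {a : ZMod (4 * k)} (h : Odd a.val) : inr a ∈ resolvingSet k := by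
  obtain ⟨r, hr⟩ := h
  have := a.val_lt
  refine .inr ⟨r, by omega, ?_⟩
  rw [← hr, natCast_zmod_val]

lemma le_val_and_even_of_inl_notMem {a : ZMod (4 * k)} (h : inl a ∉ resolvingSet k) :
    2 * k ≤ a.val ∧ Even a.val :=
  ⟨not_lt.1 (mt inl_mem_resolvingSet_of_val_lt h),
    Nat.not_odd_iff_even.1 (mt inl_mem_resolvingSet_of_odd h)⟩

lemma even_val_of_inr_notMem {a : ZMod (4 * k)} (h : inr a ∉ resolvingSet k) : Even a.val :=
  Nat.not_odd_iff_even.1 (mt inr_mem_resolvingSet_of_odd h)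

lemma exists_mem_resolvingSet_stronglyResolves_inl_inl {i j : ZMod (4 * k)}
    (hi : inl i ∉ resolvingSet k) (hj : inl j ∉ resolvingSet k) :
    ∃ w ∈ resolvingSet k, StronglyResolves (GP (4 * k) 2) w (inl i) (inl j) := by
  obtain ⟨hi₁, hi₂⟩ := le_val_and_even_of_inl_notMem hi
  obtain ⟨hj₁, hj₂⟩ := le_val_and_even_of_inl_notMem hj
  obtain ⟨i', hi', h₁, h₂⟩ := exists_odd_val_one_step_away (even_four_mul k) hi₂
    (two_mul_cycAbs_sub_ne (i := i) (j := j) (by omega) (by omega))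
  exact ⟨inl i', inl_mem_resolvingSet_of_odd hi',
    stronglyResolves_inl_inl (even_four_mul k) h₁ h₂ (even_cycAbs_sub (even_four_mul k) hi₂ hj₂)⟩

lemma exists_mem_resolvingSet_stronglyResolves_inl_inr (hk : 2 ≤ k) {i j : ZMod (4 * k)}
    (hi : inl i ∉ resolvingSet k) (hj : inr j ∉ resolvingSet k) :
    ∃ w ∈ resolvingSet k, StronglyResolves (GP (4 * k) 2) w (inl i) (inr j) := by
  obtain ⟨hi₁, hi₂⟩ := le_val_and_even_of_inl_notMem hi
  have he := even_cycAbs_sub (even_four_mul k) hi₂ (even_val_of_inr_notMem hj)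
  by_cases hanti : 2 * (j - i).cycAbs = 4 * k
  · have := two_mul_val_lt_of_two_mul_cycAbs_eq hanti (by omega)
    exact ⟨inl j, inl_mem_resolvingSet_of_val_lt (by omega),
      stronglyResolves_inl_inr_of_antipodal (even_four_mul k) hanti (by omega)⟩
  · obtain ⟨i', hi', h₁, h₂⟩ := exists_odd_val_one_step_away (even_four_mul k) hi₂ hanti
    exact ⟨inl i', inl_mem_resolvingSet_of_odd hi',
      stronglyResolves_inl_inr (even_four_mul k) h₁ h₂ he⟩

lemma exists_mem_resolvingSet_stronglyResolves_inr_inr {i j : ZMod (4 * k)}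
    (hi : inr i ∉ resolvingSet k) (hj : inr j ∉ resolvingSet k) :
    ∃ w ∈ resolvingSet k, StronglyResolves (GP (4 * k) 2) w (inr i) (inr j) := by
  have hi₂ := even_val_of_inr_notMem hi
  have hj₂ := even_val_of_inr_notMem hj
  have he := even_cycAbs_sub (even_four_mul k) hi₂ hj₂
  rcases lt_or_ge i.val (2 * k) with hi₁ | hi₁
  · exact ⟨inl i, inl_mem_resolvingSet_of_val_lt hi₁,
      stronglyResolves_inl_inr_inr (even_four_mul k) he⟩
  rcases lt_or_ge j.val (2 * k) with hj₁ | hj₁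
  · have he' : Even (i - j).cycAbs := by rwa [← neg_sub, cycAbs_neg]
    exact ⟨inl j, inl_mem_resolvingSet_of_val_lt hj₁,
      (stronglyResolves_inl_inr_inr (even_four_mul k) he').symm⟩
  obtain ⟨i', hi', h₁, h₂⟩ := exists_odd_val_one_step_away (even_four_mul k) hi₂
    (two_mul_cycAbs_sub_ne (i := i) (j := j) (by omega) (by omega))
  exact ⟨inr i', inr_mem_resolvingSet_of_odd hi',
    stronglyResolves_inr_inr (even_four_mul k) h₁ h₂ he⟩

lemma exists_mem_resolvingSet_stronglyResolves (hk : 2 ≤ k) {x y : ZMod (4 * k) ⊕ ZMod (4 * k)}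
    (hx : x ∉ resolvingSet k) (hy : y ∉ resolvingSet k) :
    ∃ w ∈ resolvingSet k, StronglyResolves (GP (4 * k) 2) w x y := by
  rcases x with i | i <;> rcases y with j | j
  · exact exists_mem_resolvingSet_stronglyResolves_inl_inl hx hy
  · exact exists_mem_resolvingSet_stronglyResolves_inl_inr hk hx hy
  · obtain ⟨w, hw, h⟩ := exists_mem_resolvingSet_stronglyResolves_inl_inr hk hy hx
    exact ⟨w, hw, h.symm⟩
  · exact exists_mem_resolvingSet_stronglyResolves_inr_inr hx hy

theorem isStrongResolvingSet_resolvingSet (hk : 2 ≤ k) :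
    IsStrongResolvingSet (GP (4 * k) 2) (resolvingSet k) :=
  isStrongResolvingSet_of_forall_notMem fun _ _ ↦ exists_mem_resolvingSet_stronglyResolves hk

end ResolvingSet

/-- For `k ≥ 3`, `S = {uᵢ : 0 ≤ i ≤ 2k−1} ∪ {u_{2k+2i+1} : 0 ≤ i ≤ k−1} ∪
{v_{2i+1} : 0 ≤ i ≤ 2k−1}` is a strong resolving set of `GP (4k) 2`. -/
theorem stmt_7 (k : ℕ) (hk : 3 ≤ k) :
    IsStrongResolvingSet (GP (4*k) 2)
      ({x | ∃ i : ℕ, i ≤ 2*k - 1 ∧ x = Sum.inl ((i : ℕ) : ZMod (4*k))} ∪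
       {x | ∃ i : ℕ, i ≤ k - 1 ∧ x = Sum.inl ((2*k + 2*i + 1 : ℕ) : ZMod (4*k))} ∪
       {x | ∃ i : ℕ, i ≤ 2*k - 1 ∧ x = Sum.inr ((2*i + 1 : ℕ) : ZMod (4*k))}) := by
  have : NeZero k := ⟨by omega⟩
  exact isStrongResolvingSet_resolvingSet (by omega)
end

section
/- In the generalized Petersen graph GP(4k,2) with k ≥ 3, for every i with 0 ≤ i ≤ k−1 one has d(u_{2i}, u_{2i+2k}) = k+2. -/
namespace GP

open SimpleGraph

variable {n : ℕ}

def index : ZMod n ⊕ ZMod n → ZMod n := Sum.elim id id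

/-- `z` is an integer lift of the displacement along the walk, which uses `a` outer edges,
`b` inner edges and `s` spokes. -/
theorem exists_walk_decomposition {x y : ZMod n ⊕ ZMod n} (p : (GP n 2).Walk x y) :
    ∃ (z : ℤ) (a b s : ℕ), p.length = a + b + s ∧ (z : ZMod n) = index y - index x ∧
      z.natAbs ≤ a + 2 * b ∧ (x.isRight ≠ y.isRight → 1 ≤ s) ∧
      (1 ≤ b → 2 ≤ s + x.isRight.toNat + y.isRight.toNat) := by
  induction p with
  | nil => exact ⟨0, 0, 0, 0, by simp⟩
  | @cons x x' y h p ih =>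
    obtain ⟨z, a, b, s, hlen, hz, habs, hcross, hinner⟩ := ih
    rw [Walk.length_cons, hlen]
    rcases x with i | i <;> rcases x' with j | j
    · obtain ⟨d, hd, hd1⟩ : ∃ d : ℤ, (d : ZMod n) = j - i ∧ d.natAbs ≤ 1 := by
        obtain ⟨-, rfl | rfl⟩ := h
        · exact ⟨1, by simp, le_rfl⟩
        · exact ⟨-1, by simp, le_rfl⟩
      refine ⟨z + d, a + 1, b, s, by ring, ?_, by omega, hcross, hinner⟩
      push_cast [hz, hd]; simp only [index, Sum.elim_inl, id_eq]; ring
    · obtain rfl : i = j := h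
      refine ⟨z, a, b, s + 1, by ring, hz, habs, fun _ => by omega, fun hb => ?_⟩
      have := hinner hb
      simp only [Sum.isRight_inl, Sum.isRight_inr, Bool.toNat_false, Bool.toNat_true] at this ⊢
      omega
    · obtain rfl : i = j := h
      refine ⟨z, a, b, s + 1, by ring, hz, habs, fun _ => by omega, fun _ => ?_⟩
      simp only [Sum.isRight_inr, Bool.toNat_true]
      omega
    · obtain ⟨d, hd, hd2⟩ : ∃ d : ℤ, (d : ZMod n) = j - i ∧ d.natAbs ≤ 2 := by
        obtain ⟨-, rfl | rfl⟩ := h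
        · exact ⟨2, by simp, le_rfl⟩
        · exact ⟨-2, by simp, le_rfl⟩
      refine ⟨z + d, a, b + 1, s, by ring, ?_, by omega, hcross, fun _ => ?_⟩
      · push_cast [hz, hd]; simp only [index, Sum.elim_inr, id_eq]; ring
      · simp only [Sum.isRight_inr, Bool.toNat_true] at hcross ⊢
        cases hy : y.isRight
        · have := hcross (by simp [hy]); omega
        · simp

/-- A walk between outer vertices that uses an inner edge also uses two spokes. -/
theorem exists_lift_of_walk_inl {i j : ZMod n} (p : (GP n 2).Walk (.inl i) (.inl j)) :
    ∃ z : ℤ, (z : ZMod n) = j - i ∧ (z.natAbs ≤ p.length ∨ z.natAbs + 4 ≤ 2 * p.length) := by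
  obtain ⟨z, a, b, s, hlen, hz, habs, -, hs⟩ := exists_walk_decomposition p
  simp only [Sum.isRight_inl, Bool.toNat_false, add_zero] at hs
  refine ⟨z, hz, ?_⟩
  rcases Nat.eq_zero_or_pos b with hb | hb
  · left; omega
  · have := hs hb; right; omega

theorem exists_walk_inr_add (h2 : (2 : ZMod n) ≠ 0) (j : ZMod n) (m : ℕ) :
    ∃ p : (GP n 2).Walk (.inr j) (.inr (j + 2 * m)), p.length = m := by
  induction m generalizing j with
  | zero => exact ⟨Walk.nil.copy rfl (by simp), by simp⟩
  | succ m ih =>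
    obtain ⟨p, hp⟩ := ih (j + 2)
    have hadj : (GP n 2).Adj (.inr j) (.inr (j + 2)) :=
      ⟨by simpa using h2, .inl rfl⟩
    exact ⟨.cons hadj (p.copy rfl (by push_cast; congr 1; ring)), by simp [hp]⟩

theorem exists_walk_inl_add (h2 : (2 : ZMod n) ≠ 0) (j : ZMod n) (m : ℕ) :
    ∃ p : (GP n 2).Walk (.inl j) (.inl (j + 2 * m)), p.length = m + 2 := by
  obtain ⟨p, hp⟩ := exists_walk_inr_add h2 j m
  have hin : (GP n 2).Adj (.inl j) (.inr j) := rfl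
  have hout : (GP n 2).Adj (.inr (j + 2 * m)) (.inl (j + 2 * m)) := rfl
  exact ⟨.cons hin (p.concat hout), by simp [hp]⟩

end GP

/-- In `GP (4k) 2` with `k ≥ 3`: `d(u_{2i}, u_{2i+2k}) = k+2` for `0 ≤ i ≤ k−1`. -/
theorem stmt_9 (k : ℕ) (hk : 3 ≤ k) :
    ∀ i : ℕ, i ≤ k - 1 →
      (GP (4*k) 2).dist (Sum.inl ((2*i : ℕ) : ZMod (4*k)))
        (Sum.inl ((2*i + 2*k : ℕ) : ZMod (4*k))) = k + 2 := by
  intro i _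
  have h2 : (2 : ZMod (4 * k)) ≠ 0 := by
    simpa using (ZMod.natCast_eq_zero_iff 2 (4 * k)).not.mpr
      (Nat.not_dvd_of_pos_of_lt two_pos (by omega))
  have hend : ((2 * i + 2 * k : ℕ) : ZMod (4 * k)) = (2 * i : ℕ) + 2 * (k : ℕ) := by
    push_cast; ring
  obtain ⟨w, hw⟩ := GP.exists_walk_inl_add h2 ((2 * i : ℕ) : ZMod (4 * k)) k
  rw [hend]
  refine le_antisymm (hw ▸ SimpleGraph.dist_le w) ?_
  obtain ⟨p, hp⟩ := SimpleGraph.Reachable.exists_walk_length_eq_dist ⟨w⟩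
  obtain ⟨z, hz, hlen⟩ := GP.exists_lift_of_walk_inl p
  have hz2k : 2 * k ≤ z.natAbs := by
    refine ZMod.natAbs_min_of_le_div_two (4 * k) (2 * k) z ?_ (by omega)
    rw [hz]; push_cast; ring
  omega
end
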